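/- Unbiasedness of the AIPW correction term: under overlap (e(X) > 0) and ignorability, for any outcome model μ₁ : 𝒳 → ℝ, E[ Z·(Y − μ₁(X)) / e(X) ] = E[Y(1)] − E[μ₁(X)]. Consequently the AIPW functional E[μ₁(X)] + E[ Z·(Y − μ₁(X)) / e(X) ] equals E[Y(1)] regardless of μ₁. -/

import Mathlib

/-!
On the fiber `X = x` the summand equals `Z · g(Y(1), Y(0)) / e(x)` with `g(y₁, y₀) = y₁ - μ₁(x)`,
because `Z ∈ {0, 1}` and `Y = Y(1)` where `Z = 1`. Ignorability says that, on that fiber, restricting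
the law of `(Y(1), Y(0))` to `Z = 1` multiplies it by `P(Z = 1 | X = x) = e(x)`; dividing by `e(x)`
therefore gives back `E[g(Y(1), Y(0)); X = x] = E[Y(1) - μ₁(X); X = x]`. Summing over the fibers
yields `E[Y(1)] - E[μ₁(X)]`.
-/

open scoped Classical
open Finset

noncomputable def pr {Ω : Type*} [Fintype Ω] (P : Ω → ℝ) (A : Ω → Prop) : ℝ :=
  ∑ ω, if A ω then P ω else 0

noncomputable def expec {Ω : Type*} [Fintype Ω] (P : Ω → ℝ) (f : Ω → ℝ) : ℝ :=
  ∑ ω, P ω * f ω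

noncomputable def cexp {Ω : Type*} [Fintype Ω] (P : Ω → ℝ) (f : Ω → ℝ) (A : Ω → Prop) : ℝ :=
  (∑ ω, if A ω then P ω * f ω else 0) / pr P A

/-- `E[f; A]`, the numerator of `cexp P f A`. -/
noncomputable def expecOn {Ω : Type*} [Fintype Ω] (P : Ω → ℝ) (f : Ω → ℝ) (A : Ω → Prop) : ℝ :=
  ∑ ω, if A ω then P ω * f ω else 0

section FiniteProbability

variable {Ω : Type*} [Fintype Ω] {P : Ω → ℝ}

theorem expec_sub (f g : Ω → ℝ) :
    expec P (fun ω => f ω - g ω) = expec P f - expec P g := by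
  simp only [expec, mul_sub, sum_sub_distrib]

theorem pr_nonneg (hP : ∀ ω, 0 ≤ P ω) (A : Ω → Prop) : 0 ≤ pr P A :=
  sum_nonneg fun ω _ => by split_ifs <;> simp [hP ω]

theorem expec_eq_sum_expecOn_fiber {α : Type*} [Fintype α] (f : Ω → ℝ) (X : Ω → α) :
    expec P f = ∑ x, expecOn P f (fun ω => X ω = x) := by
  simp only [expec, expecOn]
  rw [sum_comm]
  simp

theorem expecOn_congr {f g : Ω → ℝ} {A : Ω → Prop} (h : ∀ ω, A ω → f ω = g ω) :
    expecOn P f A = expecOn P g A :=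
  sum_congr rfl fun ω _ => by
    split_ifs with hω
    · rw [h ω hω]
    · rfl

theorem expecOn_div_const (f : Ω → ℝ) (A : Ω → Prop) (c : ℝ) :
    expecOn P (fun ω => f ω / c) A = expecOn P f A / c := by
  simp only [expecOn, sum_div]
  exact sum_congr rfl fun ω _ => by split_ifs <;> ring

theorem expecOn_mul_of_zero_or_one {Z : Ω → ℝ} (hZ : ∀ ω, Z ω = 0 ∨ Z ω = 1) (f : Ω → ℝ)
    (A : Ω → Prop) :
    expecOn P (fun ω => Z ω * f ω) A = expecOn P f (fun ω => Z ω = 1 ∧ A ω) :=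
  sum_congr rfl fun ω _ => by rcases hZ ω with h | h <;> by_cases hA : A ω <;> simp [h, hA]

theorem expecOn_eq_zero_of_pr_eq_zero (hP : ∀ ω, 0 ≤ P ω) {A : Ω → Prop} (h : pr P A = 0)
    (f : Ω → ℝ) : expecOn P f A = 0 := by
  have hzero := (sum_eq_zero_iff_of_nonneg fun ω _ => by split_ifs <;> simp [hP ω]).mp h
  exact sum_eq_zero fun ω _ => by
    split_ifs with hA
    · simpa [hA] using Or.inl (hzero ω (mem_univ ω))
    · rfl

theorem expecOn_comp_eq_sum {β : Type*} [DecidableEq β] (V : Ω → β) (g : β → ℝ)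
    (A : Ω → Prop) :
    expecOn P (fun ω => g (V ω)) A = ∑ v ∈ univ.image V, g v * pr P (fun ω => V ω = v ∧ A ω) := by
  simp only [expecOn, pr, mul_sum, mul_ite, mul_zero]
  rw [sum_comm]
  refine sum_congr rfl fun ω _ => ?_
  simp only [ite_and]
  rw [sum_ite_eq _ (V ω), if_pos (mem_image_of_mem V (mem_univ ω))]
  split_ifs <;> ring

theorem expecOn_comp_mul_eq {β : Type*} {V : Ω → β} {A B : Ω → Prop} {c d : ℝ}
    (h : ∀ v, pr P (fun ω => V ω = v ∧ A ω) * c = pr P (fun ω => V ω = v ∧ B ω) * d)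
    (g : β → ℝ) :
    expecOn P (fun ω => g (V ω)) A * c = expecOn P (fun ω => g (V ω)) B * d := by
  simp only [expecOn_comp_eq_sum, sum_mul, mul_assoc, h]

theorem expecOn_ipw_eq {β : Type*} (hP : ∀ ω, 0 ≤ P ω) {Z : Ω → ℝ}
    (hZ : ∀ ω, Z ω = 0 ∨ Z ω = 1) {V : Ω → β} {B : Ω → Prop} {c : ℝ}
    (hc : c = pr P (fun ω => Z ω = 1 ∧ B ω) / pr P B) (hc_pos : 0 < pr P B → 0 < c)
    (hind : ∀ v, pr P (fun ω => V ω = v ∧ Z ω = 1 ∧ B ω) * pr P B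
      = pr P (fun ω => V ω = v ∧ B ω) * pr P (fun ω => Z ω = 1 ∧ B ω))
    (g : β → ℝ) :
    expecOn P (fun ω => Z ω * g (V ω) / c) B = expecOn P (fun ω => g (V ω)) B := by
  rcases (pr_nonneg hP B).eq_or_lt with hB | hB
  · simp only [expecOn_eq_zero_of_pr_eq_zero hP hB.symm]
  have hc_ne : c ≠ 0 := (hc_pos hB).ne'
  rw [expecOn_div_const, expecOn_mul_of_zero_or_one hZ, div_eq_iff hc_ne]
  refine mul_right_cancel₀ hB.ne' ?_
  calc expecOn P (fun ω => g (V ω)) (fun ω => Z ω = 1 ∧ B ω) * pr P B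
      = expecOn P (fun ω => g (V ω)) B * pr P (fun ω => Z ω = 1 ∧ B ω) :=
        expecOn_comp_mul_eq hind g
    _ = expecOn P (fun ω => g (V ω)) B * c * pr P B := by
        rw [hc, mul_assoc, div_mul_cancel₀ _ hB.ne']

end FiniteProbability

theorem aipw_correction_unbiased_general {Ω 𝒳 : Type*} [Fintype Ω] [Fintype 𝒳]
    (P : Ω → ℝ) (hP : ∀ ω, 0 ≤ P ω)
    (X : Ω → 𝒳) (Z : Ω → ℝ) (Y1 Y0 Y : Ω → ℝ)
    (hZ : ∀ ω, Z ω = 0 ∨ Z ω = 1)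
    (consistency : ∀ ω, Y ω = Z ω * Y1 ω + (1 - Z ω) * Y0 ω)
    (e : 𝒳 → ℝ)
    (he : ∀ x, e x = pr P (fun ω => Z ω = 1 ∧ X ω = x) / pr P (fun ω => X ω = x))
    (overlap : ∀ x : 𝒳, 0 < pr P (fun ω => X ω = x) → 0 < e x)
    (ignorability : ∀ (x : 𝒳) (z y1 y0 : ℝ),
      pr P (fun ω => Y1 ω = y1 ∧ Y0 ω = y0 ∧ Z ω = z ∧ X ω = x) * pr P (fun ω => X ω = x)
        = pr P (fun ω => Y1 ω = y1 ∧ Y0 ω = y0 ∧ X ω = x)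
            * pr P (fun ω => Z ω = z ∧ X ω = x))
    (μ1 : 𝒳 → ℝ) :
    expec P (fun ω => Z ω * (Y ω - μ1 (X ω)) / e (X ω))
        = expec P Y1 - expec P (fun ω => μ1 (X ω)) ∧
    expec P (fun ω => μ1 (X ω)) + expec P (fun ω => Z ω * (Y ω - μ1 (X ω)) / e (X ω))
        = expec P Y1 := by
  have fiber : ∀ x, expecOn P (fun ω => Z ω * (Y ω - μ1 (X ω)) / e (X ω)) (fun ω => X ω = x)
      = expecOn P (fun ω => Y1 ω - μ1 (X ω)) (fun ω => X ω = x) := by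
    intro x
    have hind : ∀ v : ℝ × ℝ,
        pr P (fun ω => (Y1 ω, Y0 ω) = v ∧ Z ω = 1 ∧ X ω = x) * pr P (fun ω => X ω = x)
          = pr P (fun ω => (Y1 ω, Y0 ω) = v ∧ X ω = x) * pr P (fun ω => Z ω = 1 ∧ X ω = x) := by
      rintro ⟨y1, y0⟩
      simpa only [Prod.mk.injEq, and_assoc] using ignorability x 1 y1 y0
    calc _ = expecOn P (fun ω => Z ω * (Y1 ω - μ1 x) / e x) (fun ω => X ω = x) :=
          expecOn_congr fun ω hω => by
            rcases hZ ω with h | h <;> simp [hω, consistency ω, h]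
      _ = expecOn P (fun ω => Y1 ω - μ1 x) (fun ω => X ω = x) :=
          expecOn_ipw_eq (V := fun ω => (Y1 ω, Y0 ω)) hP hZ (he x) (overlap x) hind
            (fun v => v.1 - μ1 x)
      _ = _ := expecOn_congr fun ω hω => by rw [hω]
  have unbiased : expec P (fun ω => Z ω * (Y ω - μ1 (X ω)) / e (X ω))
      = expec P Y1 - expec P (fun ω => μ1 (X ω)) := by
    rw [expec_eq_sum_expecOn_fiber _ X, sum_congr rfl fun x _ => fiber x,
      ← expec_eq_sum_expecOn_fiber, expec_sub]
  exact ⟨unbiased, by linarith⟩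

/-- The AIPW correction term is unbiased:
E[Z(Y − μ₁(X))/e(X)] = E[Y(1)] − E[μ₁(X)], hence the AIPW functional equals E[Y(1)]
for any outcome model μ₁. -/
theorem aipw_correction_unbiased {Ω 𝒳 : Type*} [Fintype Ω] [Fintype 𝒳]
    (P : Ω → ℝ) (hP : ∀ ω, 0 ≤ P ω) (hP1 : ∑ ω, P ω = 1)
    (X : Ω → 𝒳) (Z : Ω → ℝ) (Y1 Y0 Y : Ω → ℝ)
    (hZ : ∀ ω, Z ω = 0 ∨ Z ω = 1)
    (consistency : ∀ ω, Y ω = Z ω * Y1 ω + (1 - Z ω) * Y0 ω)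
    (e : 𝒳 → ℝ)
    (he : ∀ x, e x = pr P (fun ω => Z ω = 1 ∧ X ω = x) / pr P (fun ω => X ω = x))
    (overlap : ∀ x : 𝒳, 0 < pr P (fun ω => X ω = x) → 0 < e x)
    (ignorability : ∀ (x : 𝒳) (z y1 y0 : ℝ),
      pr P (fun ω => Y1 ω = y1 ∧ Y0 ω = y0 ∧ Z ω = z ∧ X ω = x) * pr P (fun ω => X ω = x)
        = pr P (fun ω => Y1 ω = y1 ∧ Y0 ω = y0 ∧ X ω = x)
            * pr P (fun ω => Z ω = z ∧ X ω = x))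
    (μ1 : 𝒳 → ℝ) :
    expec P (fun ω => Z ω * (Y ω - μ1 (X ω)) / e (X ω))
        = expec P Y1 - expec P (fun ω => μ1 (X ω)) ∧
    expec P (fun ω => μ1 (X ω)) + expec P (fun ω => Z ω * (Y ω - μ1 (X ω)) / e (X ω))
        = expec P Y1 :=
  aipw_correction_unbiased_general P hP X Z Y1 Y0 Y hZ consistency e he overlap ignorability μ1
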